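/- Let Φ be the ℂ[x,t^{±1}]-algebra endomorphism of ℂ[x,y,z,t^{±1},w] given by Φ(y)=xy - xw² - 2zw, Φ(z)=z+xw, Φ(w)=2w+yz+3xyw-3zw²-xw³. Then Φ(xy+z²+x+t³) = x²y+z²+x+t³. -/

import Mathlib

open MvPolynomial LaurentPolynomial

-- We work in ℂ[x,y,z,t^{±1},w] = (ℂ[t,t⁻¹])[x,y,z,w], with x = X 0, y = X 1,
-- z = X 2, w = X 3, and t = MvPolynomial.C (T 1).

/-- The ℂ[x,t^{±1}]-algebra endomorphism Φ. -/
noncomputable def PhiL :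
    MvPolynomial (Fin 4) (LaurentPolynomial ℂ) →ₐ[LaurentPolynomial ℂ]
      MvPolynomial (Fin 4) (LaurentPolynomial ℂ) :=
  aeval ![X 0,
    X 0 * X 1 - X 0 * X 3 ^ 2 - 2 * X 2 * X 3,
    X 2 + X 0 * X 3,
    2 * X 3 + X 1 * X 2 + 3 * X 0 * X 1 * X 3 - 3 * X 2 * X 3 ^ 2 - X 0 * X 3 ^ 3]

/-! Only the images of `x`, `y`, `z` matter: `x · Φ(y) + Φ(z)² = x²y - x²w² - 2xzw + (z + xw)²`,
and the `w`-terms cancel. -/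

lemma PhiL_X_zero : PhiL (X 0) = X 0 := aeval_X _ _

lemma PhiL_X_one : PhiL (X 1) = X 0 * X 1 - X 0 * X 3 ^ 2 - 2 * X 2 * X 3 := aeval_X _ _

lemma PhiL_X_two : PhiL (X 2) = X 2 + X 0 * X 3 := aeval_X _ _

lemma PhiL_C (a : LaurentPolynomial ℂ) : PhiL (MvPolynomial.C a) = MvPolynomial.C a :=
  PhiL.commutes a

theorem stmt18 :
    PhiL (X 0 * X 1 + X 2 ^ 2 + X 0 + MvPolynomial.C (T 3)) =
      X 0 ^ 2 * X 1 + X 2 ^ 2 + X 0 + MvPolynomial.C (T 3) := by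
  rw [map_add, map_add, map_add, map_mul, map_pow, PhiL_X_zero, PhiL_X_one, PhiL_X_two, PhiL_C]
  ring
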